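/- Fix λ > 0, let x̃(d) (for real d > 0) be the unique positive solution of d·x = 1 + f_d(x) where f_d(x) = λ/(1+x)^d. Then x̃ is differentiable in d and dx̃/dd = -((1+x̃)·(f_d(x̃)·log(1+x̃) + x̃))/(d·(1+d)·x̃) ≤ 0; in particular x̃ is non-increasing in d. -/

import Mathlib

/-!
The residual `Φ(d, x) = d x - 1 - λ (1 + x)^(-d)` is strictly increasing in `x > -1`, so `x̃ d` is
the only zero of `Φ(d, ·)`, and `∂ₓΦ = d + λ d (1 + x)^(-d-1) > 0`. The implicit function theorem
therefore makes `x̃` differentiable with `x̃' = -∂_dΦ / ∂ₓΦ`, and the fixed-point relation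
`d x̃ = 1 + f_d(x̃)` rewrites `∂ₓΦ` as `d (1 + d) x̃ / (1 + x̃)`. All terms of
`∂_dΦ = x̃ + f_d(x̃) log (1 + x̃)` are nonnegative, so `x̃' ≤ 0` and `x̃` is antitone.
-/
open Filter Topology ContinuousLinearMap

section ImplicitFunction

variable {𝕜 : Type*} [NontriviallyNormedField 𝕜]
  {E₁ : Type*} [NormedAddCommGroup E₁] [NormedSpace 𝕜 E₁] [CompleteSpace E₁]
  {E₂ : Type*} [NormedAddCommGroup E₂] [NormedSpace 𝕜 E₂] [CompleteSpace E₂]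
  {F : Type*} [NormedAddCommGroup F] [NormedSpace 𝕜 F] [CompleteSpace F]

theorem HasStrictFDerivAt.hasStrictFDerivAt_of_levelSet_subset_graph
    {u : E₁ × E₂} {f : E₁ × E₂ → F} {f'u : E₁ × E₂ →L[𝕜] F}
    (dfu : HasStrictFDerivAt f f'u u) (if₂u : (f'u ∘L .inr 𝕜 E₁ E₂).IsInvertible) {g : E₁ → E₂}
    (hg : ∀ᶠ v in 𝓝 u, f v = f u → g v.1 = v.2) :
    HasStrictFDerivAt g (-(f'u ∘L .inr 𝕜 E₁ E₂).inverse ∘L (f'u ∘L .inl 𝕜 E₁ E₂)) u.1 := by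
  have hψ : Tendsto (fun x => (x, dfu.implicitFunctionOfProdDomain if₂u x)) (𝓝 u.1) (𝓝 u) :=
    tendsto_id.prodMk_nhds (dfu.tendsto_implicitFunctionOfProdDomain if₂u)
  have hgψ : dfu.implicitFunctionOfProdDomain if₂u =ᶠ[𝓝 u.1] g := by
    filter_upwards [hψ.eventually hg, dfu.eventually_apply_implicitFunctionOfProdDomain if₂u]
      with x hx hfx using (hx hfx).symm
  exact (dfu.hasStrictFDerivAt_implicitFunctionOfProdDomain if₂u).congr_of_eventuallyEq hgψ

theorem HasStrictFDerivAt.hasStrictDerivAt_of_levelSet_subset_graph [CompleteSpace 𝕜]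
    {f : 𝕜 × 𝕜 → 𝕜} {a b s t : 𝕜}
    (hf : HasStrictFDerivAt f (a • fst 𝕜 𝕜 𝕜 + b • snd 𝕜 𝕜 𝕜) (s, t)) (hb : b ≠ 0) {g : 𝕜 → 𝕜}
    (hg : ∀ᶠ v in 𝓝 (s, t), f v = f (s, t) → g v.1 = v.2) :
    HasStrictDerivAt g (-(a / b)) s := by
  have hpartial : (a • fst 𝕜 𝕜 𝕜 + b • snd 𝕜 𝕜 𝕜) ∘L .inr 𝕜 𝕜 𝕜 = b • .id 𝕜 𝕜 := by
    ext; simp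
  have hright : (b • .id 𝕜 𝕜) ∘L (b⁻¹ • .id 𝕜 𝕜) = .id 𝕜 𝕜 := by ext; simp [hb]
  have hleft : (b⁻¹ • .id 𝕜 𝕜) ∘L (b • .id 𝕜 𝕜) = .id 𝕜 𝕜 := by ext; simp [hb]
  rw [← hpartial] at hright hleft
  have hD := (hf.hasStrictFDerivAt_of_levelSet_subset_graph
    (.of_inverse hright hleft) hg).hasStrictDerivAt
  rw [inverse_eq hright hleft] at hD
  simpa [div_eq_mul_inv] using hD

end ImplicitFunction

open Real

noncomputable def fixedPointResidual (lam : ℝ) (p : ℝ × ℝ) : ℝ :=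
  p.1 * p.2 - 1 - lam * (1 + p.2) ^ (-p.1)

theorem fixedPointResidual_eq_zero_iff {lam d x : ℝ} (hx : 0 < 1 + x) :
    fixedPointResidual lam (d, x) = 0 ↔ d * x = 1 + lam / (1 + x) ^ d := by
  rw [fixedPointResidual, rpow_neg hx.le, sub_sub, sub_eq_zero, div_eq_mul_inv]

theorem strictMonoOn_fixedPointResidual {lam e : ℝ} (hlam : 0 ≤ lam) (he : 0 < e) :
    StrictMonoOn (fun y => fixedPointResidual lam (e, y)) (Set.Ioi (-1)) := by
  intro y hy z hz hyz
  have hpow : lam * (1 + z) ^ (-e) ≤ lam * (1 + y) ^ (-e) :=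
    mul_le_mul_of_nonneg_left
      (rpow_le_rpow_of_nonpos (by linarith [Set.mem_Ioi.mp hy]) (by linarith) (by linarith)) hlam
  have hlin : e * y < e * z := mul_lt_mul_of_pos_left hyz he
  simp only [fixedPointResidual]
  linarith

theorem hasStrictFDerivAt_fixedPointResidual (lam d x : ℝ) (hx : 0 < 1 + x) :
    HasStrictFDerivAt (fixedPointResidual lam)
      ((x + lam * (1 + x) ^ (-d) * log (1 + x)) • fst ℝ ℝ ℝ
        + (d + lam * d * (1 + x) ^ (-d - 1)) • snd ℝ ℝ ℝ) (d, x) := by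
  have hbase : HasStrictFDerivAt (fun p : ℝ × ℝ => (1 + p.2, -p.1))
      (((0 : ℝ × ℝ →L[ℝ] ℝ) + snd ℝ ℝ ℝ).prod (-fst ℝ ℝ ℝ)) (d, x) :=
    ((hasStrictFDerivAt_const 1 _).add hasStrictFDerivAt_snd).prodMk hasStrictFDerivAt_fst.neg
  have hpow := (hasStrictFDerivAt_rpow_of_pos (1 + x, -d) hx).comp (d, x) hbase
  refine (((hasStrictFDerivAt_fst.mul hasStrictFDerivAt_snd).sub_const 1).sub
    (hpow.const_mul lam)).congr_fderiv ?_
  ext <;> simp <;> ring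

theorem hasStrictDerivAt_of_fixedPointResidual_eq_zero {lam : ℝ} (hlam : 0 ≤ lam) {xt : ℝ → ℝ}
    (hxt : ∀ d > 0, -1 < xt d ∧ fixedPointResidual lam (d, xt d) = 0) {d : ℝ} (hd : 0 < d) :
    HasStrictDerivAt xt
      (-((xt d + lam * (1 + xt d) ^ (-d) * log (1 + xt d)) /
        (d + lam * d * (1 + xt d) ^ (-d - 1)))) d := by
  obtain ⟨hx, hres⟩ := hxt d hd
  have hx1 : 0 < 1 + xt d := by linarith
  have hb : d + lam * d * (1 + xt d) ^ (-d - 1) ≠ 0 := by positivity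
  refine (hasStrictFDerivAt_fixedPointResidual lam d (xt d) hx1
    ).hasStrictDerivAt_of_levelSet_subset_graph hb ?_
  have hnear : ∀ᶠ p in 𝓝 (d, xt d), 0 < p.1 ∧ -1 < p.2 :=
    (continuous_fst.tendsto _ |>.eventually (eventually_gt_nhds hd)).and
      (continuous_snd.tendsto _ |>.eventually (eventually_gt_nhds hx))
  filter_upwards [hnear] with p ⟨hp1, hp2⟩ hp
  obtain ⟨hxp, hresp⟩ := hxt p.1 hp1
  exact (strictMonoOn_fixedPointResidual hlam hp1).injOn hxp hp2
    (hresp.trans (hres.symm.trans hp.symm))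

theorem hasDerivAt_of_fixedPoint {lam : ℝ} (hlam : 0 ≤ lam) {xt : ℝ → ℝ}
    (hxt : ∀ d > (0 : ℝ), 0 < xt d ∧ d * xt d = 1 + lam / (1 + xt d) ^ d) {d : ℝ} (hd : 0 < d) :
    HasDerivAt xt
      (-((1 + xt d) * ((lam / (1 + xt d) ^ d) * log (1 + xt d) + xt d)) /
        (d * (1 + d) * xt d)) d := by
  have hres : ∀ d > 0, -1 < xt d ∧ fixedPointResidual lam (d, xt d) = 0 := fun d hd =>
    ⟨by linarith [(hxt d hd).1], (fixedPointResidual_eq_zero_iff (by linarith [(hxt d hd).1])).2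
      (hxt d hd).2⟩
  refine (hasStrictDerivAt_of_fixedPointResidual_eq_zero hlam hres hd).hasDerivAt.congr_deriv ?_
  obtain ⟨hx, hfix⟩ := hxt d hd
  set x := xt d
  set f := lam / (1 + x) ^ d
  have hx1 : 0 < 1 + x := by linarith
  have hf : lam * (1 + x) ^ (-d) = f := by rw [rpow_neg hx1.le, ← div_eq_mul_inv]
  have hf' : lam * (1 + x) ^ (-d - 1) = f / (1 + x) := by
    rw [rpow_sub_one hx1.ne', ← hf, mul_div_assoc]
  clear_value f
  have hden : d + lam * d * (1 + x) ^ (-d - 1) = d * (1 + d) * x / (1 + x) := by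
    rw [mul_right_comm, hf']
    field_simp
    linear_combination -hfix
  rw [hf, hden]
  field_simp
  ring

theorem fixed_point_deriv_nonpos (lam : ℝ) (hlam : 0 < lam) (xt : ℝ → ℝ)
    (hxt : ∀ d > (0 : ℝ), 0 < xt d ∧ d * xt d = 1 + lam / (1 + xt d) ^ d) :
    (∀ d > (0 : ℝ),
      HasDerivAt xt
        (-((1 + xt d) * ((lam / (1 + xt d) ^ d) * Real.log (1 + xt d) + xt d)) /
          (d * (1 + d) * xt d)) d ∧
      -((1 + xt d) * ((lam / (1 + xt d) ^ d) * Real.log (1 + xt d) + xt d)) /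
          (d * (1 + d) * xt d) ≤ 0) ∧
    AntitoneOn xt (Set.Ioi 0) := by
  have hderiv : ∀ d > (0 : ℝ), HasDerivAt xt _ d := fun d hd =>
    hasDerivAt_of_fixedPoint hlam.le hxt hd
  have hsign : ∀ d > (0 : ℝ),
      -((1 + xt d) * ((lam / (1 + xt d) ^ d) * log (1 + xt d) + xt d)) /
        (d * (1 + d) * xt d) ≤ 0 := by
    intro d hd
    have hx := (hxt d hd).1
    have hlog : 0 ≤ log (1 + xt d) := log_nonneg (by linarith)
    exact div_nonpos_of_nonpos_of_nonneg (neg_nonpos.2 (by positivity)) (by positivity)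
  refine ⟨fun d hd => ⟨hderiv d hd, hsign d hd⟩, ?_⟩
  exact antitoneOn_of_deriv_nonpos (convex_Ioi 0)
    (fun d hd => (hderiv d hd).continuousAt.continuousWithinAt)
    (fun d hd => (hderiv d (interior_subset hd)).differentiableAt.differentiableWithinAt)
    (fun d hd => (hderiv d (interior_subset hd)).deriv ▸ hsign d (interior_subset hd))
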